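/- Let C ∈ ℕ with C ≥ 1, let ō ∈ ℝ with 0 < ō < C, set q = ō/C, and let ε ∈ ℝ with 0 < ε < 1/√(2C). Suppose the set U = { m ∈ ℕ : m ≤ C and ∑_{m'=m}^{C} (C choose m') q^{m'} (1−q)^{C−m'} < ε } is nonempty and let O_max = min U. Then: (i) O_max ≥ ō + √((C − ō)·ō·((ε·√(2C))^{−1/C} − 1)); and (ii) every m ∈ ℕ with ō + √((C/2)·ln(1/ε)) < m ≤ C belongs to U, so in particular O_max < ō + √((C/2)·ln(1/ε)) + 1. -/

import Mathlib

/-!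
Write `n = C`, `P(k)` for the binomial weights and `T(m) = ∑_{k ≥ m} P(k)` for the upper tail.

Lower bound. Stirling's formula with the effective bounds `√π ≤ stirlingSeq k ≤ stirlingSeq 2`
gives `n ^ n ≤ √(2n) · C(n,k) · k ^ k · (n-k) ^ (n-k)`, and weighted AM-GM (the chi-square bound
on the Kullback-Leibler divergence) then gives `1 ≤ √(2n) · P(k) · S ^ n` with
`S = 1 + (k - nq)² / (n² q (1-q))`. At `k = O_max`, where `P(k) ≤ T(k) < ε`, this forces
`S > (ε√(2n)) ^ (-1/n)`, which unwinds to the first bound provided `O_max > nq`. The latter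
holds because `T(m) ≥ 1/√(2n) > ε` for `m ≤ nq`: by Cantelli's inequality when the variance
`nq(1-q)` is at most `4`, and otherwise already from the two terms `P(⌈nq⌉) + P(⌈nq⌉ + 1)`,
each bounded below by the same single-term estimate.

Upper bound. The Chernoff bound together with Hoeffding's lemma for a Bernoulli variable gives
`T(m) < exp(-2(m - nq)² / n) ≤ ε` as soon as `m ≥ nq + √((n/2) ln(1/ε))`. The Chernoff bound
is strict, so `m` may equal this threshold; hence `O_max - 1` lies below it.
-/

open Finset Real MeasureTheory ProbabilityTheory

noncomputable def binomProb (n : ℕ) (q : ℝ) (k : ℕ) : ℝ :=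
  n.choose k * q ^ k * (1 - q) ^ (n - k)

noncomputable def binomTail (n : ℕ) (q : ℝ) (m : ℕ) : ℝ :=
  ∑ k ∈ Icc m n, binomProb n q k

section Stirling

open Stirling Nat

lemma stirlingSeq_two : stirlingSeq 2 = exp 1 ^ 2 / 4 := by
  rw [stirlingSeq, show (2 : ℝ) * (2 : ℕ) = 2 ^ 2 by norm_num, sqrt_sq zero_le_two]
  field_simp
  norm_num

lemma stirlingSeq_le_of_two_le {m : ℕ} (hm : 2 ≤ m) : stirlingSeq m ≤ exp 1 ^ 2 / 4 := by
  obtain ⟨i, rfl⟩ := Nat.exists_eq_add_of_le' hm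
  rw [← stirlingSeq_two]
  exact stirlingSeq'_antitone (show 1 ≤ i + 1 by omega)

lemma stirlingSeq_pos {m : ℕ} (hm : m ≠ 0) : 0 < stirlingSeq m :=
  (sqrt_pos.2 pi_pos).trans_le (sqrt_pi_le_stirlingSeq hm)

lemma sq_stirlingSeq_one_mul_le {j : ℕ} (hj : 2 ≤ j) :
    stirlingSeq 1 ^ 2 * 2 * (stirlingSeq j ^ 2 * (2 * j)) ≤ π * (2 * (1 + j)) ^ 2 := by
  have hE6 : exp 1 ^ 6 < 404 :=
    calc exp 1 ^ 6 < 2.7182818286 ^ 6 := by gcongr; exact exp_one_lt_d9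
      _ < 404 := by norm_num
  have hsj := pow_le_pow_left₀ (stirlingSeq_pos (by omega)).le (stirlingSeq_le_of_two_le hj) 2
  have hj' : 4.5 * (j : ℝ) ≤ (1 + j) ^ 2 := by
    have : (2 : ℝ) ≤ j := by exact_mod_cast hj
    nlinarith
  rw [stirlingSeq_one, div_pow, sq_sqrt zero_le_two]
  calc exp 1 ^ 2 / 2 * 2 * (stirlingSeq j ^ 2 * (2 * j))
      ≤ exp 1 ^ 2 / 2 * 2 * ((exp 1 ^ 2 / 4) ^ 2 * (2 * j)) := by gcongr
    _ = exp 1 ^ 6 / 32 * j * 4 := by ring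
    _ ≤ 404 / 32 * j * 4 := by gcongr
    _ ≤ 3.14 * (4.5 * j) * 4 := by linarith [(j.cast_nonneg : (0 : ℝ) ≤ j)]
    _ ≤ π * (1 + j) ^ 2 * 4 := by gcongr; exact pi_gt_d2.le
    _ = π * (2 * (1 + j)) ^ 2 := by ring

lemma sq_stirlingSeq_mul_le {k j : ℕ} (hk : 2 ≤ k) (hj : 2 ≤ j) :
    stirlingSeq k ^ 2 * (2 * k) * (stirlingSeq j ^ 2 * (2 * j)) ≤ π * (2 * (k + j)) ^ 2 := by
  have hE8 : exp 1 ^ 8 < 2982 :=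
    calc exp 1 ^ 8 < 2.7182818286 ^ 8 := by gcongr; exact exp_one_lt_d9
      _ < 2982 := by norm_num
  have hsk := pow_le_pow_left₀ (stirlingSeq_pos (by omega)).le (stirlingSeq_le_of_two_le hk) 2
  have hsj := pow_le_pow_left₀ (stirlingSeq_pos (by omega)).le (stirlingSeq_le_of_two_le hj) 2
  have hkj : 4 * ((k : ℝ) * j) ≤ (k + j) ^ 2 := by nlinarith [sq_nonneg ((k : ℝ) - j)]
  calc stirlingSeq k ^ 2 * (2 * k) * (stirlingSeq j ^ 2 * (2 * j))
      ≤ (exp 1 ^ 2 / 4) ^ 2 * (2 * k) * ((exp 1 ^ 2 / 4) ^ 2 * (2 * j)) := by gcongr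
    _ = exp 1 ^ 8 / 1024 * (4 * (k * j)) * 4 := by ring
    _ ≤ 2982 / 1024 * (k + j) ^ 2 * 4 := by gcongr
    _ ≤ π * (k + j) ^ 2 * 4 := by gcongr; linarith [pi_gt_d2]
    _ = π * (2 * (k + j)) ^ 2 := by ring

lemma stirlingSeq_mul_sqrt_mul_le {k j : ℕ} (hk : k ≠ 0) (hj : j ≠ 0) :
    stirlingSeq k * √(2 * k) * (stirlingSeq j * √(2 * j))
      ≤ stirlingSeq (k + j) * (2 * (k + j)) := by
  wlog hkj : k ≤ j generalizing k j
  · have := this hj hk (by omega)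
    rwa [mul_comm (stirlingSeq j * _), add_comm j, add_comm (j : ℝ)] at this
  rcases (show j = 1 ∨ 2 ≤ j by omega) with rfl | hj2
  · -- equality: `n ^ n ≤ √(2n) · C(n,k) · k ^ k · (n-k) ^ (n-k)` is tight at `n = 2`, `k = 1`
    obtain rfl : k = 1 := by omega
    refine le_of_eq ?_
    simp only [Nat.cast_one, mul_one, Nat.reduceAdd, stirlingSeq_one, stirlingSeq_two]
    rw [div_mul_cancel₀ _ (Real.sqrt_pos.2 two_pos).ne']
    ring
  have hsq : stirlingSeq k ^ 2 * (2 * k) * (stirlingSeq j ^ 2 * (2 * j))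
      ≤ π * (2 * (k + j)) ^ 2 := by
    rcases (show k = 1 ∨ 2 ≤ k by omega) with rfl | hk2
    · simpa using sq_stirlingSeq_one_mul_le hj2
    · exact sq_stirlingSeq_mul_le hk2 hj2
  calc stirlingSeq k * √(2 * k) * (stirlingSeq j * √(2 * j)) ≤ √π * (2 * (k + j)) := by
        have h0 := mul_nonneg (mul_nonneg (stirlingSeq_pos hk).le (sqrt_nonneg (2 * k)))
          (mul_nonneg (stirlingSeq_pos hj).le (sqrt_nonneg (2 * j)))
        refine (pow_le_pow_iff_left₀ h0 (by positivity) two_ne_zero).1 ?_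
        simpa only [mul_pow, sq_sqrt (by positivity : (0 : ℝ) ≤ 2 * k),
          sq_sqrt (by positivity : (0 : ℝ) ≤ 2 * j), sq_sqrt pi_pos.le] using hsq
    _ ≤ stirlingSeq (k + j) * (2 * (k + j)) := by
        gcongr
        exact sqrt_pi_le_stirlingSeq (by omega)

lemma factorial_eq_stirlingSeq_mul {m : ℕ} (hm : m ≠ 0) :
    (m ! : ℝ) = stirlingSeq m * √(2 * m) * m ^ m / exp 1 ^ m := by
  have : (0 : ℝ) < m := by positivity
  rw [stirlingSeq, div_pow]
  field_simp

lemma factorial_mul_factorial_mul_pow_le {k j : ℕ} (hk : k ≠ 0) (hj : j ≠ 0) :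
    (k ! : ℝ) * j ! * ((k : ℝ) + j) ^ (k + j)
      ≤ √(2 * (k + j)) * (k + j)! * k ^ k * j ^ j := by
  have hF : 0 < (k : ℝ) ^ k * j ^ j * ((k : ℝ) + j) ^ (k + j) / exp 1 ^ (k + j) := by positivity
  have hkj : k + j ≠ 0 := by omega
  calc (k ! : ℝ) * j ! * ((k : ℝ) + j) ^ (k + j)
      = stirlingSeq k * √(2 * k) * (stirlingSeq j * √(2 * j))
          * ((k : ℝ) ^ k * j ^ j * ((k : ℝ) + j) ^ (k + j) / exp 1 ^ (k + j)) := by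
        rw [factorial_eq_stirlingSeq_mul hk, factorial_eq_stirlingSeq_mul hj, pow_add (exp 1)]
        field_simp
    _ ≤ stirlingSeq (k + j) * (2 * (k + j))
          * ((k : ℝ) ^ k * j ^ j * ((k : ℝ) + j) ^ (k + j) / exp 1 ^ (k + j)) := by
        exact mul_le_mul_of_nonneg_right (stirlingSeq_mul_sqrt_mul_le hk hj) hF.le
    _ = √(2 * (k + j)) * (k + j)! * k ^ k * j ^ j := by
        rw [factorial_eq_stirlingSeq_mul hkj]
        push_cast
        field_simp
        rw [sq_sqrt (by positivity)]
        ring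

lemma add_pow_le_sqrt_mul_choose_mul_pow_mul_pow (k j : ℕ) (hkj : k + j ≠ 0) :
    ((k : ℝ) + j) ^ (k + j) ≤ √(2 * (k + j)) * (k + j).choose k * k ^ k * j ^ j := by
  rcases Nat.eq_zero_or_pos k with rfl | hk
  · have : (1 : ℝ) ≤ √(2 * (0 + j)) := one_le_sqrt.2 (by
      have : (1 : ℝ) ≤ j := by exact_mod_cast (by omega : 1 ≤ j)
      linarith)
    simpa using le_mul_of_one_le_left (by positivity) this
  rcases Nat.eq_zero_or_pos j with rfl | hj
  · have : (1 : ℝ) ≤ √(2 * (k + 0)) := one_le_sqrt.2 (by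
      have : (1 : ℝ) ≤ k := by exact_mod_cast (by omega : 1 ≤ k)
      linarith)
    simpa using le_mul_of_one_le_left (by positivity) this
  rw [Nat.cast_add_choose, mul_div_assoc', div_mul_eq_mul_div, div_mul_eq_mul_div,
    le_div_iff₀ (by positivity)]
  calc ((k : ℝ) + j) ^ (k + j) * (k ! * j !) = k ! * j ! * ((k : ℝ) + j) ^ (k + j) := by ring
    _ ≤ _ := factorial_mul_factorial_mul_pow_le hk.ne' hj.ne'

end Stirling

lemma pow_mul_pow_le_add_div_pow {x y : ℝ} (hx : 0 ≤ x) (hy : 0 ≤ y) (k j : ℕ) :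
    x ^ k * y ^ j ≤ ((k * x + j * y) / (k + j)) ^ (k + j) := by
  rcases Nat.eq_zero_or_pos (k + j) with h | h
  · obtain ⟨rfl, rfl⟩ : k = 0 ∧ j = 0 := by omega
    simp
  have hn : (0 : ℝ) < k + j := by exact_mod_cast h
  have hAMGM := geom_mean_le_arith_mean2_weighted (w₁ := k / (k + j)) (w₂ := j / (k + j))
    (by positivity) (by positivity) hx hy (by field_simp)
  calc x ^ k * y ^ j = (x ^ ((k : ℝ) / (k + j)) * y ^ ((j : ℝ) / (k + j))) ^ (k + j) := by
        rw [mul_pow, ← rpow_natCast (x ^ _), ← rpow_mul hx, ← rpow_natCast (y ^ _),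
          ← rpow_mul hy]
        push_cast
        rw [div_mul_cancel₀ _ hn.ne', div_mul_cancel₀ _ hn.ne', rpow_natCast, rpow_natCast]
    _ ≤ (k / (k + j) * x + j / (k + j) * y) ^ (k + j) := by gcongr
    _ = _ := by congr 1; field_simp

lemma one_sub_add_mul_exp_le {q : ℝ} (hq0 : 0 ≤ q) (hq1 : q ≤ 1) (t : ℝ) :
    1 - q + q * exp t ≤ exp (q * t + t ^ 2 / 8) := by
  set μ : Measure ℝ := bernoulliMeasure 1 0 ⟨q, hq0, hq1⟩
  have hsupp : ∀ᵐ x ∂μ, x ∈ Set.Icc (0 : ℝ) 1 := by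
    rw [ae_iff]
    exact bernoulliMeasure_apply_of_notMem_of_notMem _ measurableSet_Icc.compl (by simp) (by simp)
  have h := (hasSubgaussianMGF_of_mem_Icc aemeasurable_id hsupp).mgf_le t
  simp only [mgf, id, μ, integral_bernoulliMeasure, smul_eq_mul, mul_one, mul_zero,
    add_zero, zero_sub, sub_zero, nnnorm_one] at h
  have e1 : exp (q * t) * exp (t * (1 - q)) = exp t := by rw [← exp_add]; ring_nf
  have e2 : exp (q * t) * exp (t * -q) = 1 := by rw [← exp_add, ← exp_zero]; ring_nf
  calc 1 - q + q * exp t = exp (q * t) * (q * exp (t * (1 - q)) + (1 - q) * exp (t * -q)) := by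
        linear_combination (-q) * e1 - (1 - q) * e2
    _ ≤ exp (q * t) * exp (t ^ 2 / 8) := by
        gcongr
        refine h.trans_eq (congrArg exp ?_)
        push_cast
        ring
    _ = exp (q * t + t ^ 2 / 8) := (exp_add _ _).symm

lemma bernsteinPolynomial_eval (n k : ℕ) (q : ℝ) :
    (bernsteinPolynomial ℝ n k).eval q = binomProb n q k := by
  simp [bernsteinPolynomial, binomProb]

lemma sum_binomProb (n : ℕ) (q : ℝ) : ∑ k ∈ range (n + 1), binomProb n q k = 1 := by
  simpa [Polynomial.eval_finsetSum, bernsteinPolynomial_eval] using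
    congrArg (Polynomial.eval q) (bernsteinPolynomial.sum ℝ n)

lemma sum_mul_binomProb (n : ℕ) (q : ℝ) :
    ∑ k ∈ range (n + 1), (k : ℝ) * binomProb n q k = n * q := by
  simpa [Polynomial.eval_finsetSum, bernsteinPolynomial_eval] using
    congrArg (Polynomial.eval q) (bernsteinPolynomial.sum_smul ℝ n)

lemma sum_sq_mul_binomProb (n : ℕ) (q : ℝ) :
    ∑ k ∈ range (n + 1), (n * q - k) ^ 2 * binomProb n q k = n * q * (1 - q) := by
  simpa [Polynomial.eval_finsetSum, bernsteinPolynomial_eval, mul_assoc] using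
    congrArg (Polynomial.eval q) (bernsteinPolynomial.variance ℝ n)

lemma sum_sub_sq_mul_binomProb (n : ℕ) (q c : ℝ) :
    ∑ k ∈ range (n + 1), (c - k) ^ 2 * binomProb n q k = n * q * (1 - q) + (c - n * q) ^ 2 := by
  have h0 := sum_binomProb n q
  have h1 := sum_mul_binomProb n q
  have h2 := sum_sq_mul_binomProb n q
  calc ∑ k ∈ range (n + 1), (c - k) ^ 2 * binomProb n q k
      = ∑ k ∈ range (n + 1), ((n * q - k) ^ 2 * binomProb n q k
          - 2 * (c - n * q) * (k * binomProb n q k)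
          + ((c - n * q) ^ 2 + 2 * (c - n * q) * (n * q)) * binomProb n q k) :=
        sum_congr rfl fun k _ => by ring
    _ = _ := by
        rw [sum_add_distrib, sum_sub_distrib, ← mul_sum, ← mul_sum, h0, h1, h2]
        ring

section Binomial

variable {n m k : ℕ} {q ε : ℝ}

lemma binomProb_nonneg (hq0 : 0 ≤ q) (hq1 : q ≤ 1) (k : ℕ) : 0 ≤ binomProb n q k := by
  have := sub_nonneg.2 hq1
  unfold binomProb
  positivity

lemma binomTail_eq_one_sub (hm : m ≤ n + 1) :
    binomTail n q m = 1 - ∑ k ∈ range m, binomProb n q k := by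
  rw [← sum_binomProb n q, ← sum_range_add_sum_Ico _ hm, binomTail,
    ← Ico_add_one_right_eq_Icc]
  exact (add_sub_cancel_left _ _).symm

lemma sum_range_binomProb_le (hq0 : 0 ≤ q) (hq1 : q ≤ 1) (hm : (m : ℝ) < n * q + 1) :
    ∑ k ∈ range m, binomProb n q k
      ≤ n * q * (1 - q) / (n * q * (1 - q) + (n * q + 1 - m) ^ 2) := by
  set V := n * q * (1 - q)
  set d := n * q + 1 - m
  have hV : 0 ≤ V := by have := sub_nonneg.2 hq1; positivity
  have hd : 0 < d := by simp only [d]; linarith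
  set c := n * q + V / d
  have hdc : 0 < d + V / d := by positivity
  have hmn : m ≤ n + 1 := by
    have : (m : ℝ) < n + 1 := by nlinarith
    exact_mod_cast this.le
  -- Cantelli: the weight `((c - k) / (d + V / d)) ^ 2` is `≥ 1` on `k < m`
  -- and has mean `V / (V + d ^ 2)`
  calc ∑ k ∈ range m, binomProb n q k
      ≤ ∑ k ∈ range m, ((c - k) / (d + V / d)) ^ 2 * binomProb n q k := by
        refine sum_le_sum fun k hk => le_mul_of_one_le_left (binomProb_nonneg hq0 hq1 k) ?_
        have hk : (k : ℝ) + 1 ≤ m := by exact_mod_cast mem_range.1 hk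
        rw [div_pow, one_le_div (by positivity)]
        exact pow_le_pow_left₀ hdc.le (by simp only [c, d] at *; linarith) 2
    _ ≤ ∑ k ∈ range (n + 1), ((c - k) / (d + V / d)) ^ 2 * binomProb n q k :=
        sum_le_sum_of_subset_of_nonneg (range_subset_range.2 hmn)
          fun k _ _ => mul_nonneg (sq_nonneg _) (binomProb_nonneg hq0 hq1 k)
    _ = (V + (V / d) ^ 2) / (d + V / d) ^ 2 := by
        simp_rw [div_pow, div_mul_eq_mul_div, ← sum_div, sum_sub_sq_mul_binomProb, c,
          add_sub_cancel_left, div_pow]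
        rfl
    _ = V / (V + d ^ 2) := by
        field_simp
        ring

lemma inv_variance_add_one_le_binomTail (hq0 : 0 ≤ q) (hq1 : q ≤ 1) (hm : (m : ℝ) ≤ n * q) :
    1 / (n * q * (1 - q) + 1) ≤ binomTail n q m := by
  set V := n * q * (1 - q)
  have hV : 0 ≤ V := by have := sub_nonneg.2 hq1; positivity
  have hd : 1 ≤ n * q + 1 - m := by linarith
  have hmn : m ≤ n + 1 := by
    have : (m : ℝ) ≤ n + 1 := by nlinarith
    exact_mod_cast this
  have hCantelli := sum_range_binomProb_le hq0 hq1 (m := m) (by linarith)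
  have hd2 : 1 ≤ (n * q + 1 - m) ^ 2 := by nlinarith
  have : 1 / (V + 1) ≤ 1 - V / (V + (n * q + 1 - m) ^ 2) := by
    rw [one_sub_div (by positivity), add_sub_cancel_left,
      div_le_div_iff₀ (by positivity) (by positivity)]
    nlinarith
  rw [binomTail_eq_one_sub hmn]
  linarith

lemma one_le_sqrt_mul_binomProb_mul_pow (hq0 : 0 < q) (hq1 : q < 1)
    (hn : n ≠ 0) (hk : k ≤ n) :
    1 ≤ √(2 * n) * binomProb n q k * (1 + (k - n * q) ^ 2 / (n * (n * q * (1 - q)))) ^ n := by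
  obtain ⟨j, rfl⟩ := Nat.exists_eq_add_of_le hk
  have hq1' : 0 < 1 - q := sub_pos.2 hq1
  have hn' : (0 : ℝ) < k + j := by exact_mod_cast Nat.pos_of_ne_zero hn
  set x := (k : ℝ) / ((k + j) * q)
  set y := (j : ℝ) / ((k + j) * (1 - q))
  have hS : (k * x + j * y) / (k + j)
      = 1 + (k - (k + j) * q) ^ 2 / ((k + j) * ((k + j) * q * (1 - q))) := by
    simp only [x, y]
    field_simp
    ring
  have hP : √(2 * (k + j)) * binomProb (k + j) q k * (x ^ k * y ^ j)
      = √(2 * (k + j)) * (k + j).choose k * k ^ k * j ^ j / ((k : ℝ) + j) ^ (k + j) := by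
    simp only [binomProb, x, y, Nat.add_sub_cancel_left, div_pow, mul_pow]
    field_simp
    ring
  push_cast
  rw [← hS]
  calc (1 : ℝ) ≤ √(2 * (k + j)) * binomProb (k + j) q k * (x ^ k * y ^ j) := by
        rw [hP, one_le_div (by positivity)]
        exact add_pow_le_sqrt_mul_choose_mul_pow_mul_pow k j hn
    _ ≤ _ := mul_le_mul_of_nonneg_left
          (pow_mul_pow_le_add_div_pow (by positivity) (by positivity) k j)
          (mul_nonneg (sqrt_nonneg _) (binomProb_nonneg hq0.le hq1.le k))

lemma exp_neg_le_sqrt_mul_binomProb (hq0 : 0 < q) (hq1 : q < 1)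
    (hn : n ≠ 0) (hk : k ≤ n) :
    exp (-((k - n * q) ^ 2 / (n * q * (1 - q)))) ≤ √(2 * n) * binomProb n q k := by
  have hn' : (0 : ℝ) < n := by exact_mod_cast Nat.pos_of_ne_zero hn
  have hV : 0 < n * q * (1 - q) := by have := sub_pos.2 hq1; positivity
  set u := (k - n * q) ^ 2 / (n * (n * q * (1 - q)))
  have hpow : (1 + u) ^ n ≤ exp ((k - n * q) ^ 2 / (n * q * (1 - q))) := by
    have hu : 0 ≤ u := by positivity
    calc (1 + u) ^ n ≤ exp u ^ n :=
          pow_le_pow_left₀ (by linarith) (by linarith [add_one_le_exp u]) n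
      _ = _ := by
          rw [← exp_nat_mul]
          congr 1
          simp only [u]
          field_simp
  rw [exp_neg, inv_le_iff_one_le_mul₀ (exp_pos _)]
  calc 1 ≤ √(2 * n) * binomProb n q k * (1 + u) ^ n :=
        one_le_sqrt_mul_binomProb_mul_pow hq0 hq1 hn hk
    _ ≤ _ := mul_le_mul_of_nonneg_left hpow
          (mul_nonneg (sqrt_nonneg _) (binomProb_nonneg hq0.le hq1.le k))

lemma one_div_sqrt_le_binomTail_of_variance_le (hn : n ≠ 0) (hq0 : 0 ≤ q) (hq1 : q ≤ 1)
    (hV : n * q * (1 - q) ≤ 4) (hm : (m : ℝ) ≤ n * q) :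
    1 / √(2 * n) ≤ binomTail n q m := by
  have hn1 : (1 : ℝ) ≤ n := by exact_mod_cast Nat.one_le_iff_ne_zero.2 hn
  have hV0 : 0 ≤ n * q * (1 - q) := by have := sub_nonneg.2 hq1; positivity
  have hVn : n * q * (1 - q) ≤ n / 4 := by nlinarith [sq_nonneg (2 * q - 1)]
  refine (one_div_le_one_div_of_le (by positivity) ?_).trans
    (inv_variance_add_one_le_binomTail hq0 hq1 hm)
  rw [le_sqrt (by positivity) (by positivity)]
  rcases le_or_gt (n : ℝ) 23 with h23 | h23
  · nlinarith [mul_nonneg (sub_nonneg.2 hn1) (sub_nonneg.2 h23)]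
  · nlinarith

lemma one_div_sqrt_le_binomTail_of_four_lt_variance (hq0 : 0 < q) (hq1 : q < 1)
    (hV : 4 < n * q * (1 - q)) (hm : (m : ℝ) ≤ n * q) :
    1 / √(2 * n) ≤ binomTail n q m := by
  set V := n * q * (1 - q)
  have hn : n ≠ 0 := by rintro rfl; simp [V] at hV; linarith
  have hnq : 0 ≤ (n : ℝ) * q := by positivity
  obtain ⟨k, hk, hk1⟩ : ∃ k : ℕ, n * q ≤ k ∧ (k : ℝ) < n * q + 1 :=
    ⟨⌈(n : ℝ) * q⌉₊, Nat.le_ceil _, Nat.ceil_lt_add_one hnq⟩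
  have hkn : k + 1 ≤ n := by
    have : ((k + 1 : ℕ) : ℝ) < n := by push_cast; nlinarith
    exact_mod_cast this.le
  have hmk : m ≤ k := by exact_mod_cast hm.trans hk
  have hpair : binomProb n q k + binomProb n q (k + 1) ≤ binomTail n q m := by
    rw [← sum_pair (f := binomProb n q) k.succ_ne_self.symm, binomTail]
    refine sum_le_sum_of_subset_of_nonneg ?_ fun i _ _ => binomProb_nonneg hq0.le hq1.le i
    intro i hi
    simp only [mem_insert, mem_singleton] at hi
    rw [mem_Icc]
    omega
  have hk' : exp (-(1 / 4)) ≤ exp (-((k - n * q) ^ 2 / V)) := by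
    gcongr
    nlinarith
  have hk'' : exp (-1) ≤ exp (-(((k + 1 : ℕ) - n * q) ^ 2 / V)) := by
    gcongr
    rw [div_le_iff₀ (by linarith)]
    push_cast
    nlinarith
  have hexp : 1 ≤ exp (-(1 / 4)) + exp (-1) := by
    have h1 : 3 / 4 ≤ exp (-(1 / 4) : ℝ) := by linarith [add_one_le_exp (-(1 / 4) : ℝ)]
    have h2 : 0.36 ≤ exp (-1 : ℝ) := by
      rw [exp_neg, le_inv_comm₀ (by norm_num) (exp_pos 1)]
      linarith [exp_one_lt_d9]
    linarith
  rw [div_le_iff₀ (by positivity)]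
  calc 1 ≤ √(2 * n) * binomProb n q k + √(2 * n) * binomProb n q (k + 1) := by
        linarith [exp_neg_le_sqrt_mul_binomProb hq0 hq1 hn (k := k) (by omega),
          exp_neg_le_sqrt_mul_binomProb hq0 hq1 hn hkn]
    _ ≤ binomTail n q m * √(2 * n) := by nlinarith [sqrt_nonneg (2 * n : ℝ)]

lemma one_div_sqrt_le_binomTail (hn : n ≠ 0) (hq0 : 0 ≤ q) (hq1 : q ≤ 1)
    (hm : (m : ℝ) ≤ n * q) :
    1 / √(2 * n) ≤ binomTail n q m := by
  rcases le_or_gt (n * q * (1 - q)) 4 with hV | hV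
  · exact one_div_sqrt_le_binomTail_of_variance_le hn hq0 hq1 hV hm
  · have hq0' : 0 < q := hq0.lt_of_ne (by rintro rfl; simp at hV; linarith)
    have hq1' : q < 1 := hq1.lt_of_ne (by rintro rfl; simp at hV; linarith)
    exact one_div_sqrt_le_binomTail_of_four_lt_variance hq0' hq1' hV hm

lemma binomTail_lt_exp_mul (hq0 : 0 ≤ q) (hq1 : q < 1) (hm : m ≠ 0) {t : ℝ} (ht : 0 ≤ t) :
    binomTail n q m < exp (-(t * m)) * (1 - q + q * exp t) ^ n := by
  set f : ℕ → ℝ := fun k => n.choose k * (q * exp t) ^ k * (1 - q) ^ (n - k)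
  have hq1' : 0 < 1 - q := sub_pos.2 hq1
  have hf : ∀ k, 0 ≤ f k := fun k => by positivity
  calc binomTail n q m ≤ ∑ k ∈ Icc m n, exp (-(t * m)) * f k := by
        refine sum_le_sum fun k hk => ?_
        have hkm : (m : ℝ) ≤ k := by exact_mod_cast (mem_Icc.1 hk).1
        have : exp (-(t * m)) * f k = exp (t * (k - m)) * binomProb n q k := by
          rw [show t * (k - m) = -(t * m) + k * t by ring, exp_add, exp_nat_mul]
          simp only [f, binomProb, mul_pow]
          ring
        rw [this]
        exact le_mul_of_one_le_left (binomProb_nonneg hq0 hq1.le k) (one_le_exp (by nlinarith))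
    _ = exp (-(t * m)) * ∑ k ∈ Icc m n, f k := (mul_sum _ _ _).symm
    _ < exp (-(t * m)) * ∑ k ∈ range (n + 1), f k := by
        gcongr
        refine sum_lt_sum_of_subset (fun k hk => ?_) (i := 0) (by simp) (by simp [hm]) ?_
          fun k _ _ => hf k
        · exact mem_range.2 (Nat.lt_succ_of_le (mem_Icc.1 hk).2)
        · simp [f, hq1']
    _ = exp (-(t * m)) * (1 - q + q * exp t) ^ n := by
        rw [add_comm (1 - q), add_pow]
        exact congrArg _ (sum_congr rfl fun k _ => by simp only [f]; ring)

lemma binomTail_lt_exp_neg (hq0 : 0 ≤ q) (hq1 : q < 1) (hn : n ≠ 0) (hm0 : m ≠ 0)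
    (hm : n * q ≤ m) :
    binomTail n q m < exp (-(2 * (m - n * q) ^ 2 / n)) := by
  have hn' : (0 : ℝ) < n := by exact_mod_cast Nat.pos_of_ne_zero hn
  set t := 4 * (m - n * q) / n
  have ht : 0 ≤ t := div_nonneg (by linarith) hn'.le
  calc binomTail n q m < exp (-(t * m)) * (1 - q + q * exp t) ^ n :=
        binomTail_lt_exp_mul hq0 hq1 hm0 ht
    _ ≤ exp (-(t * m)) * exp (q * t + t ^ 2 / 8) ^ n :=
        mul_le_mul_of_nonneg_left (pow_le_pow_left₀ (by nlinarith [exp_pos t])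
          (one_sub_add_mul_exp_le hq0 hq1.le t) n) (exp_pos _).le
    _ = exp (-(2 * (m - n * q) ^ 2 / n)) := by
        rw [← exp_nat_mul, ← exp_add]
        congr 1
        simp only [t]
        field_simp
        ring

lemma binomTail_lt_of_add_sqrt_le (hq0 : 0 < q) (hq1 : q < 1) (hn : n ≠ 0) (hε0 : 0 < ε)
    (hε1 : ε ≤ 1) (hm : n * q + √(n / 2 * log (1 / ε)) ≤ m) :
    binomTail n q m < ε := by
  have hn' : (0 : ℝ) < n := by exact_mod_cast Nat.pos_of_ne_zero hn
  have hlog : 0 ≤ log (1 / ε) := log_nonneg (one_le_one_div hε0 hε1)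
  have hsqrt := sqrt_nonneg (n / 2 * log (1 / ε))
  have hm0 : m ≠ 0 := by
    rintro rfl
    have : 0 < (n : ℝ) * q := by positivity
    simp only [Nat.cast_zero] at hm
    linarith
  have hD : n / 2 * log (1 / ε) ≤ (m - n * q) ^ 2 := by
    rw [← sq_sqrt (by positivity : 0 ≤ n / 2 * log (1 / ε))]
    exact pow_le_pow_left₀ hsqrt (by linarith) 2
  calc binomTail n q m < exp (-(2 * (m - n * q) ^ 2 / n)) :=
        binomTail_lt_exp_neg hq0.le hq1 hn hm0 (by linarith)
    _ ≤ exp (-log (1 / ε)) := by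
        gcongr
        rw [le_div_iff₀ hn']
        linarith
    _ = ε := by rw [one_div, log_inv, neg_neg, exp_log hε0]

lemma add_sqrt_le_of_binomTail_lt (hq0 : 0 < q) (hq1 : q < 1) (hε0 : 0 < ε) (hk : n * q < k)
    (hkn : k ≤ n) (htail : binomTail n q k < ε) :
    n * q + √((n - n * q) * (n * q) * ((ε * √(2 * n)) ^ (-(1 : ℝ) / n) - 1)) ≤ k := by
  have hn : n ≠ 0 := by
    rintro rfl
    obtain rfl : k = 0 := by omega
    simp at hk
  have hn' : (0 : ℝ) < n := by exact_mod_cast Nat.pos_of_ne_zero hn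
  have hq1' : 0 < 1 - q := sub_pos.2 hq1
  have hV : 0 < n * q * (1 - q) := by positivity
  set W := ε * √(2 * n)
  have hW : 0 < W := by positivity
  set S := 1 + (k - n * q) ^ 2 / (n * (n * q * (1 - q)))
  have hS : 0 < S := by positivity
  have hP : binomProb n q k ≤ binomTail n q k :=
    single_le_sum (fun i _ => binomProb_nonneg hq0.le hq1.le i) (mem_Icc.2 ⟨le_rfl, hkn⟩)
  have hWS : 1 < W * S ^ n :=
    calc 1 ≤ √(2 * n) * binomProb n q k * S ^ n :=
          one_le_sqrt_mul_binomProb_mul_pow hq0 hq1 hn hkn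
      _ < √(2 * n) * ε * S ^ n := by gcongr; exact hP.trans_lt htail
      _ = W * S ^ n := by ring
  have hSW : W ^ (-(1 : ℝ) / n) < S := by
    by_contra! h
    have hSn : S ^ n ≤ W⁻¹ :=
      calc S ^ n ≤ (W ^ (-(1 : ℝ) / n)) ^ n := pow_le_pow_left₀ hS.le h n
        _ = W⁻¹ := by
          rw [← rpow_natCast, ← rpow_mul hW.le, div_mul_cancel₀ _ hn'.ne', rpow_neg_one]
    have := mul_le_mul_of_nonneg_left hSn hW.le
    rw [mul_inv_cancel₀ hW.ne'] at this
    linarith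
  have hsq : (n - n * q) * (n * q) * (W ^ (-(1 : ℝ) / n) - 1) < (k - n * q) ^ 2 :=
    calc (n - n * q) * (n * q) * (W ^ (-(1 : ℝ) / n) - 1)
        = n * (n * q * (1 - q)) * (W ^ (-(1 : ℝ) / n) - 1) := by ring
      _ < n * (n * q * (1 - q)) * (S - 1) := by gcongr
      _ = (k - n * q) ^ 2 := by simp only [S]; field_simp; ring
  rw [← le_sub_iff_add_le']
  exact sqrt_le_iff.2 ⟨by linarith, hsq.le⟩

end Binomial

theorem Omax_bounds_general
    (C : ℕ) (hC : 1 ≤ C) (obar : ℝ) (ho0 : 0 < obar) (hoC : obar < C)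
    (q : ℝ) (hq : q = obar / C)
    (ε : ℝ) (hε0 : 0 < ε) (hε1 : ε < 1 / Real.sqrt (2 * C))
    (U : Set ℕ)
    (hU : U = { m : ℕ | m ≤ C ∧
      ∑ m' ∈ Icc m C, (C.choose m' : ℝ) * q ^ m' * (1 - q) ^ (C - m') < ε })
    (Omax : ℕ) (hOmem : Omax ∈ U) (hOmin : ∀ m ∈ U, Omax ≤ m) :
    (Omax : ℝ) ≥ obar + Real.sqrt ((C - obar) * obar *
        ((ε * Real.sqrt (2 * C)) ^ (-(1 : ℝ) / C) - 1))
    ∧ (∀ m : ℕ, obar + Real.sqrt ((C / 2) * Real.log (1 / ε)) < (m : ℝ) → m ≤ C → m ∈ U)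
    ∧ (Omax : ℝ) < obar + Real.sqrt ((C / 2) * Real.log (1 / ε)) + 1 := by
  have hC0 : C ≠ 0 := by omega
  have hC' : (1 : ℝ) ≤ C := by exact_mod_cast hC
  obtain rfl : obar = C * q := by rw [hq]; field_simp
  have hq0 : 0 < q := pos_of_mul_pos_right ho0 C.cast_nonneg
  have hq1 : q < 1 := by nlinarith
  have hε1' : ε ≤ 1 := by
    refine hε1.le.trans (div_le_one_of_le₀ ?_ (sqrt_nonneg _))
    exact one_le_sqrt.2 (by linarith)
  have hmemU : ∀ m, m ∈ U ↔ m ≤ C ∧ binomTail C q m < ε := fun m => by rw [hU]; rfl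
  obtain ⟨hOC, hOtail⟩ := (hmemU Omax).1 hOmem
  have hlower : C * q < Omax := by
    by_contra! h
    linarith [one_div_sqrt_le_binomTail hC0 hq0.le hq1.le h]
  have hupper : ∀ m : ℕ, C * q + √(C / 2 * log (1 / ε)) ≤ m → m ≤ C → m ∈ U :=
    fun m hm hmC => (hmemU m).2 ⟨hmC, binomTail_lt_of_add_sqrt_le hq0 hq1 hC0 hε0 hε1' hm⟩
  refine ⟨add_sqrt_le_of_binomTail_lt hq0 hq1 hε0 hlower hOC hOtail,
    fun m hm => hupper m hm.le, ?_⟩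
  by_contra! h
  have hO1 : 1 ≤ Omax := by
    have : (0 : ℝ) < Omax := lt_of_le_of_lt (by positivity) hlower
    exact_mod_cast this
  have := hOmin (Omax - 1) (hupper _ (by push_cast [hO1]; linarith) (by omega))
  omega

/-- Two-sided bound on the upper truncation threshold `O_max` of the adaptive state
reduction scheme: with `U` the set of occupancies whose binomial upper-tail probability
is below `ε`, `O_max ≥ obar + √((C - obar) obar ((ε√(2C))^{-1/C} - 1))`, and every
`m` with `obar + √((C/2) ln(1/ε)) < m ≤ C` lies in `U` (hence
`O_max < obar + √((C/2) ln(1/ε)) + 1`). -/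
theorem Omax_bounds
    (C : ℕ) (hC : 1 ≤ C) (obar : ℝ) (ho0 : 0 < obar) (hoC : obar < C)
    (q : ℝ) (hq : q = obar / C)
    (ε : ℝ) (hε0 : 0 < ε) (hε1 : ε < 1 / Real.sqrt (2 * C))
    (U : Set ℕ)
    (hU : U = { m : ℕ | m ≤ C ∧
      ∑ m' ∈ Icc m C, (C.choose m' : ℝ) * q ^ m' * (1 - q) ^ (C - m') < ε })
    (hUne : U.Nonempty)
    (Omax : ℕ) (hOmem : Omax ∈ U) (hOmin : ∀ m ∈ U, Omax ≤ m) :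
    (Omax : ℝ) ≥ obar + Real.sqrt ((C - obar) * obar *
        ((ε * Real.sqrt (2 * C)) ^ (-(1 : ℝ) / C) - 1))
    ∧ (∀ m : ℕ, obar + Real.sqrt ((C / 2) * Real.log (1 / ε)) < (m : ℝ) → m ≤ C → m ∈ U)
    ∧ (Omax : ℝ) < obar + Real.sqrt ((C / 2) * Real.log (1 / ε)) + 1 :=
  Omax_bounds_general C hC obar ho0 hoC q hq ε hε0 hε1 U hU Omax hOmem hOmin
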